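/- Let f : ℝ^n → ℝ be convex and bounded from below, and let {x_i}_{i≥0} be a proximal sequence for f with parameters {t_i} ⊆ (0,1]. Then: (i) if x_{i+1} ≠ x_i then f(x_{i+1}) < f(x_i); and (ii) x_{i+1} is the shortest-distance projection of x_i onto the sublevel set [f ≤ f(x_{i+1})], i.e., ‖x_{i+1} − x_i‖ ≤ ‖x − x_i‖ for every x ∈ ℝ^n with f(x) ≤ f(x_{i+1}). -/

import Mathlib

/-! Both parts compare the proximal objective at its minimizer `x (i+1)` with a single
competitor. At `x i` the quadratic penalty vanishes, so a nonzero step must be paid for by a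
strict decrease of `f`. At a point `y` with `f y ≤ f (x (i+1))`, the `f`-part cannot do better,
so the penalty at `y`, i.e. its distance to `x i`, is at least that at `x (i+1)`. -/

open Set Metric

/-- `x` is a *proximal sequence* for `f` with parameters `t` if for every `i`,
`x (i+1)` minimizes `y ↦ f y + ‖y - x i‖² / (2 t i)`. -/
def IsProximalSeq {n : ℕ} (f : EuclideanSpace ℝ (Fin n) → ℝ) (t : ℕ → ℝ)
    (x : ℕ → EuclideanSpace ℝ (Fin n)) : Prop :=
  ∀ i, ∀ y, f (x (i + 1)) + ‖x (i + 1) - x i‖ ^ 2 / (2 * t i) ≤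
    f y + ‖y - x i‖ ^ 2 / (2 * t i)

section ProximalStep

variable {E : Type*} [NormedAddCommGroup E] {f : E → ℝ} {t : ℝ} {a z : E}

theorem lt_of_proximal_minimizer_of_ne (ht : 0 < t)
    (hz : ∀ y, f z + ‖z - a‖ ^ 2 / (2 * t) ≤ f y + ‖y - a‖ ^ 2 / (2 * t)) (hne : z ≠ a) :
    f z < f a := by
  have hpenalty : 0 < ‖z - a‖ ^ 2 / (2 * t) := by
    have : 0 < ‖z - a‖ := norm_pos_iff.mpr (sub_ne_zero.mpr hne)
    positivity
  have hcompare := hz a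
  rw [sub_self, norm_zero, zero_pow two_ne_zero, zero_div, add_zero] at hcompare
  linarith

theorem norm_sub_le_of_proximal_minimizer (ht : 0 < t)
    (hz : ∀ y, f z + ‖z - a‖ ^ 2 / (2 * t) ≤ f y + ‖y - a‖ ^ 2 / (2 * t))
    {y : E} (hy : f y ≤ f z) : ‖z - a‖ ≤ ‖y - a‖ := by
  have hpenalty : ‖z - a‖ ^ 2 / (2 * t) ≤ ‖y - a‖ ^ 2 / (2 * t) := by linarith [hz y]
  rw [div_le_div_iff_of_pos_right (by positivity)] at hpenalty
  exact (pow_le_pow_iff_left₀ (norm_nonneg _) (norm_nonneg _) two_ne_zero).mp hpenalty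

end ProximalStep

theorem proximal_decrease_and_projection_general {n : ℕ}
    (f : EuclideanSpace ℝ (Fin n) → ℝ)
    (t : ℕ → ℝ) (ht : ∀ i, t i ∈ Ioc (0 : ℝ) 1)
    (x : ℕ → EuclideanSpace ℝ (Fin n)) (hx : IsProximalSeq f t x) :
    (∀ i, x (i + 1) ≠ x i → f (x (i + 1)) < f (x i)) ∧
    (∀ i, ∀ y, f y ≤ f (x (i + 1)) → ‖x (i + 1) - x i‖ ≤ ‖y - x i‖) :=
  ⟨fun i => lt_of_proximal_minimizer_of_ne (ht i).1 (hx i),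
    fun i _ => norm_sub_le_of_proximal_minimizer (ht i).1 (hx i)⟩

/-- For a proximal sequence of a convex function bounded from below:
(i) the values `f (x i)` strictly decrease as long as the sequence moves, and
(ii) `x (i+1)` is the shortest-distance projection of `x i` onto the sublevel set
`[f ≤ f (x (i+1))]`. -/
theorem proximal_decrease_and_projection {n : ℕ}
    (f : EuclideanSpace ℝ (Fin n) → ℝ) (hf : ConvexOn ℝ univ f)
    (hbd : BddBelow (range f))
    (t : ℕ → ℝ) (ht : ∀ i, t i ∈ Ioc (0 : ℝ) 1)
    (x : ℕ → EuclideanSpace ℝ (Fin n)) (hx : IsProximalSeq f t x) :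
    (∀ i, x (i + 1) ≠ x i → f (x (i + 1)) < f (x i)) ∧
    (∀ i, ∀ y, f y ≤ f (x (i + 1)) → ‖x (i + 1) - x i‖ ≤ ‖y - x i‖) :=
  proximal_decrease_and_projection_general f t ht x hx
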